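/- arXiv:1103.4089 — 2 statements merged into one kernel-verified Lean document; each statement's English description precedes it below -/
import Mathlib

section
/- Let R be a unital ring containing a countable set of nonzero idempotents {e_i : i ∈ ℕ} satisfying e_i e_j = e_j e_i = e_j for all j ≥ i, and such that every nonzero two-sided ideal of R contains some e_i. Then R is left primitive. -/
/-!
The left ideal `L` generated by the elements `1 - eᵢ` is proper, since every element of `L`
is killed on the right by `eₙ` for all large `n`. For a maximal left ideal `m ⊇ L`, the module
`R ⧸ m` is simple, and it is faithful: a nonzero two-sided ideal contains some `eᵢ`, and
`eᵢ ∉ m` because `1 - eᵢ ∈ m`.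
-/

open Filter

theorem Module.faithfulSMul_of_forall_twoSidedIdeal_ne_bot {R M : Type*} [Ring R]
    [AddCommGroup M] [Module R M]
    (h : ∀ I : TwoSidedIdeal R, I ≠ ⊥ → ∃ a ∈ I, ∃ x : M, a • x ≠ 0) : FaithfulSMul R M := by
  rw [← Module.annihilator_eq_bot]
  by_contra hne
  have hI : (Module.annihilator R M).toTwoSided ≠ ⊥ := fun hbot =>
    hne (by rw [← Ideal.asIdeal_toTwoSided (Module.annihilator R M), hbot,
      TwoSidedIdeal.bot_asIdeal])
  obtain ⟨a, ha, x, hx⟩ := h _ hI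
  exact hx (Module.mem_annihilator.mp (Ideal.mem_toTwoSided.mp ha) x)

theorem Ideal.faithfulSMul_quotient_of_forall_twoSidedIdeal_ne_bot {R : Type*} [Ring R]
    (m : Ideal R) (h : ∀ I : TwoSidedIdeal R, I ≠ ⊥ → ∃ a ∈ I, a ∉ m) :
    FaithfulSMul R (R ⧸ m) := by
  refine Module.faithfulSMul_of_forall_twoSidedIdeal_ne_bot fun I hI => ?_
  obtain ⟨a, haI, ham⟩ := h I hI
  refine ⟨a, haI, Submodule.Quotient.mk 1, ?_⟩
  rwa [← Submodule.Quotient.mk_smul, smul_eq_mul, mul_one, ne_eq,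
    Submodule.Quotient.mk_eq_zero]

section DecreasingIdempotents

variable {R : Type*} [Ring R] {e : ℕ → R}

theorem eventually_mul_eq_zero_of_mem_span_one_sub (he : ∀ i j, i ≤ j → e i * e j = e j)
    {x : R} (hx : x ∈ Submodule.span R (Set.range fun i => 1 - e i)) :
    ∀ᶠ n in atTop, x * e n = 0 := by
  induction hx using Submodule.span_induction with
  | mem _ hy =>
    obtain ⟨i, rfl⟩ := hy
    filter_upwards [eventually_ge_atTop i] with n hn
    rw [sub_mul, one_mul, he i n hn, sub_self]
  | zero => exact Eventually.of_forall fun n => zero_mul _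
  | add y z _ _ hy hz =>
    filter_upwards [hy, hz] with n hyn hzn
    rw [add_mul, hyn, hzn, add_zero]
  | smul r y _ hy =>
    filter_upwards [hy] with n hyn
    rw [smul_eq_mul, mul_assoc, hyn, mul_zero]

theorem span_one_sub_ne_top (he : ∀ i j, i ≤ j → e i * e j = e j) (hne : ∀ i, e i ≠ 0) :
    Submodule.span R (Set.range fun i => 1 - e i) ≠ ⊤ := by
  intro htop
  obtain ⟨n, hn⟩ :=
    (eventually_mul_eq_zero_of_mem_span_one_sub he (htop ▸ Submodule.mem_top (x := 1))).exists
  exact hne n (by rwa [one_mul] at hn)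

end DecreasingIdempotents

theorem stmt_4_general {R : Type u} [Ring R] (e : ℕ → R)
    (hne : ∀ i, e i ≠ 0)
    (hcomm : ∀ i j, i ≤ j → e i * e j = e j ∧ e j * e i = e j)
    (hideal : ∀ I : TwoSidedIdeal R, I ≠ ⊥ → ∃ i, e i ∈ I) :
    ∃ (M : Type u) (_ : AddCommGroup M) (_ : Module R M),
      IsSimpleModule R M ∧ FaithfulSMul R M := by
  have he : ∀ i j, i ≤ j → e i * e j = e j := fun i j hij => (hcomm i j hij).1
  obtain ⟨m, hm, hLm⟩ := Ideal.exists_le_maximal _ (span_one_sub_ne_top he hne)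
  refine ⟨R ⧸ m, inferInstance, inferInstance, isSimpleModule_iff_isCoatom.mpr hm.out, ?_⟩
  refine m.faithfulSMul_quotient_of_forall_twoSidedIdeal_ne_bot fun I hI => ?_
  obtain ⟨i, hi⟩ := hideal I hI
  refine ⟨e i, hi, fun hei => hm.ne_top ((Ideal.eq_top_iff_one m).mpr ?_)⟩
  simpa using m.add_mem (hLm (Submodule.subset_span ⟨i, rfl⟩)) hei

theorem stmt_4 {R : Type u} [Ring R] (e : ℕ → R)
    (hne : ∀ i, e i ≠ 0) (hidem : ∀ i, IsIdempotentElem (e i))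
    (hcomm : ∀ i j, i ≤ j → e i * e j = e j ∧ e j * e i = e j)
    (hideal : ∀ I : TwoSidedIdeal R, I ≠ ⊥ → ∃ i, e i ∈ I) :
    ∃ (M : Type u) (_ : AddCommGroup M) (_ : Module R M),
      IsSimpleModule R M ∧ FaithfulSMul R M :=
  stmt_4_general e hne hcomm hideal
end

section
/- Let V be a type with a reflexive transitive relation ≥, and suppose T ⊆ V does not have CSP. Suppose to each v ∈ T is associated an element x_v of some monoid M such that for each v ∈ T the set Z(T,v) = {w ∈ T : x_v · x_w = 0} has CSP. Then the set T~ = {v ∈ T : {w ∈ T : x_v · x_w ≠ 0} does not have CSP} does not have CSP. -/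
/-
If a single `v ∈ T` had a nonzero set `{w ∈ T | x v * x w ≠ 0}` with CSP, then `T` would be the
union of that set and the zero set `Z(T,v)`, both with CSP, so `T` would have CSP. Hence every
`v ∈ T` lies in `T~`, i.e. `T~ = T`, which does not have CSP.
-/

def HasCSP {V : Type*} (ge : V → V → Prop) (S : Set V) : Prop :=
  ∃ C : Set V, C.Countable ∧ ∀ w ∈ S, ∃ v ∈ C, ge w v

namespace HasCSP

variable {V : Type*} {ge : V → V → Prop}

theorem mono {S S' : Set V} (h : S ⊆ S') (hS' : HasCSP ge S') : HasCSP ge S := by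
  obtain ⟨C, hC, hcover⟩ := hS'
  exact ⟨C, hC, fun w hw => hcover w (h hw)⟩

theorem union {S S' : Set V} (hS : HasCSP ge S) (hS' : HasCSP ge S') : HasCSP ge (S ∪ S') := by
  obtain ⟨C, hC, hcover⟩ := hS
  obtain ⟨C', hC', hcover'⟩ := hS'
  refine ⟨C ∪ C', hC.union hC', ?_⟩
  rintro w (hw | hw)
  · obtain ⟨v, hv, hwv⟩ := hcover w hw
    exact ⟨v, Or.inl hv, hwv⟩
  · obtain ⟨v, hv, hwv⟩ := hcover' w hw
    exact ⟨v, Or.inr hv, hwv⟩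

theorem of_sep_of_sep_not {S : Set V} (p : V → Prop)
    (hp : HasCSP ge {w ∈ S | p w}) (hnp : HasCSP ge {w ∈ S | ¬ p w}) : HasCSP ge S :=
  (hp.union hnp).mono fun w hw => (em (p w)).imp (⟨hw, ·⟩) (⟨hw, ·⟩)

end HasCSP

theorem stmt_17_general {V : Type*} (ge : V → V → Prop)
    {M : Type*} [MonoidWithZero M]
    (T : Set V) (hT : ¬ HasCSP ge T) (x : V → M)
    (hZ : ∀ v ∈ T, HasCSP ge {w ∈ T | x v * x w = 0}) :
    ¬ HasCSP ge {v ∈ T | ¬ HasCSP ge {w ∈ T | x v * x w ≠ 0}} := by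
  have hnonzero : ∀ v ∈ T, ¬ HasCSP ge {w ∈ T | x v * x w ≠ 0} := fun v hv hne =>
    hT (HasCSP.of_sep_of_sep_not (fun w => x v * x w ≠ 0) hne (by simpa using hZ v hv))
  have hT_eq : {v ∈ T | ¬ HasCSP ge {w ∈ T | x v * x w ≠ 0}} = T :=
    Set.sep_eq_self_iff_mem_true.mpr hnonzero
  rwa [hT_eq]

theorem stmt_17 {V : Type*} (ge : V → V → Prop)
    (hrefl : ∀ v, ge v v) (htrans : ∀ a b c, ge a b → ge b c → ge a c)
    {M : Type*} [MonoidWithZero M]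
    (T : Set V) (hT : ¬ HasCSP ge T) (x : V → M)
    (hZ : ∀ v ∈ T, HasCSP ge {w ∈ T | x v * x w = 0}) :
    ¬ HasCSP ge {v ∈ T | ¬ HasCSP ge {w ∈ T | x v * x w ≠ 0}} :=
  stmt_17_general ge T hT x hZ
end
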